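/- The heat semigroup is strongly continuous on 𝒳₀: for every f ∈ 𝒳₀, ‖T_t f − f‖₀ → 0 as t → 0⁺. -/

import Mathlib

/-!
For `t > 0` write `T_t f x - f x = 𝔼[f (x - √t Z) - f x]` with `Z` a standard Gaussian. Jensen's
inequality in `Z` and Fubini give `‖T_t f - f‖₀² ≤ 𝔼[G (√t Z)]`, where `G z = ‖f (· - z) - f‖₀²`.
Translating by `z` changes the weight `e^{-|x|}` by at most the factor `e^{|z|}`, so `G` grows at
most like `e^{|z|}`, and `G z → 0` as `z → 0` by continuity of translation in `L²(ℝ)` applied to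
`f e^{-|x|/2}`. Gaussian exponential moments and dominated convergence then give
`𝔼[G (√t Z)] → G 0 = 0`.
-/

open MeasureTheory ProbabilityTheory Real Filter Topology
open scoped NNReal

/-- The heat kernel `p_t(x) = (2πt)^{-1/2} exp(-x²/(2t))`. -/
noncomputable def heatKernel (t x : ℝ) : ℝ :=
  (Real.sqrt (2 * Real.pi * t))⁻¹ * Real.exp (-(x ^ 2) / (2 * t))

/-- The Brownian (heat) semigroup `T_t f(x) = ∫ p_t(x-y) f(y) dy`, with `T_0 f = f`. -/
noncomputable def heatOp (t : ℝ) (f : ℝ → ℝ) (x : ℝ) : ℝ :=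
  if t = 0 then f x else ∫ y : ℝ, heatKernel t (x - y) * f y

lemma sq_integral_le_integral_sq {Ω : Type*} [MeasurableSpace Ω] {μ : Measure Ω}
    [IsProbabilityMeasure μ] {X : Ω → ℝ} (hX : MemLp X 2 μ) :
    (∫ ω, X ω ∂μ) ^ 2 ≤ ∫ ω, X ω ^ 2 ∂μ := by
  have := variance_nonneg X μ
  rw [variance_eq_sub hX] at this
  simpa using this

lemma abs_exp_sub_one_le_exp_sub_one {a b : ℝ} (h : |a| ≤ b) : |exp a - 1| ≤ exp b - 1 := by
  have hb := abs_le.1 h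
  have hcosh : 2 ≤ exp b + exp (-b) := by linarith [add_one_le_exp b, add_one_le_exp (-b)]
  rw [abs_le]
  constructor <;> linarith [exp_le_exp.2 hb.1, exp_le_exp.2 hb.2]

lemma tendsto_integral_sq_sub_comp_sub {g : ℝ → ℝ} (hg : MemLp g 2) :
    Tendsto (fun z => ∫ x, (g (x - z) - g x) ^ 2) (𝓝 0) (𝓝 0) := by
  let τ : ℝ → C(ℝ, ℝ) := fun z => ⟨fun x => x - z, by fun_prop⟩
  have hτ : ∀ z, MeasurePreserving (τ z) := fun z => measurePreserving_sub_right volume z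
  let T : ℝ → Lp ℝ 2 (volume : Measure ℝ) := fun z =>
    Lp.compMeasurePreserving (τ z) (hτ z) (hg.toLp g)
  have hT : Tendsto T (𝓝 0) (𝓝 (T 0)) :=
    Tendsto.compMeasurePreservingLp tendsto_const_nhds
      (ContinuousMap.continuous_of_continuous_uncurry _
        (continuous_snd.sub continuous_fst)).continuousAt hτ (hτ 0) ENNReal.ofNat_ne_top
  have hcomp : ∀ z, (T z : ℝ → ℝ) =ᵐ[volume] fun x => g (x - z) := fun z =>
    (Lp.coeFn_compMeasurePreserving _ (hτ z)).trans
      ((hτ z).quasiMeasurePreserving.ae_eq_comp hg.coeFn_toLp)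
  have hnorm : ∀ z, ∫ x, (g (x - z) - g x) ^ 2 = ‖T z - T 0‖ ^ 2 := by
    intro z
    rw [← real_inner_self_eq_norm_sq, L2.inner_def]
    refine integral_congr_ae ?_
    filter_upwards [Lp.coeFn_sub (T z) (T 0), hcomp z, hcomp 0] with x h h₁ h₀
    rw [h, Pi.sub_apply, h₁, h₀, sub_zero, real_inner_self_eq_norm_sq, norm_eq_abs, sq_abs]
  simp_rw [hnorm]
  simpa using (hT.sub_const (T 0)).norm.pow 2

lemma integrable_exp_abs_gaussianReal (μ : ℝ) (v : ℝ≥0) :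
    Integrable (fun y => exp |y|) (gaussianReal μ v) := by
  refine ((integrable_exp_mul_gaussianReal 1).add (integrable_exp_mul_gaussianReal (-1))).mono'
    (by fun_prop) (ae_of_all _ fun y => ?_)
  rw [norm_of_nonneg (exp_pos _).le]
  simp only [Pi.add_apply, one_mul, neg_one_mul]
  rcases abs_cases y with ⟨h, -⟩ | ⟨h, -⟩ <;> rw [h] <;> linarith [exp_pos y, exp_pos (-y)]

lemma heatKernel_eq_gaussianPDFReal {t : ℝ} (ht : 0 ≤ t) (x : ℝ) :
    heatKernel t x = gaussianPDFReal 0 t.toNNReal x := by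
  simp [heatKernel, gaussianPDFReal, ht]

lemma heatOp_eq_integral_gaussianReal {t : ℝ} (ht : 0 < t) (f : ℝ → ℝ) (x : ℝ) :
    heatOp t f x = ∫ y, f (x - y) ∂gaussianReal 0 t.toNNReal := by
  rw [integral_gaussianReal_eq_integral_smul (by simpa using ht), heatOp, if_neg ht.ne',
    ← integral_sub_left_eq_self _ volume x]
  simp [heatKernel_eq_gaussianPDFReal ht.le]

lemma gaussianReal_zero_toNNReal_eq_map {t : ℝ} (ht : 0 ≤ t) :
    gaussianReal 0 t.toNNReal = (gaussianReal 0 1).map (√t * ·) := by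
  rw [gaussianReal_map_const_mul]
  congr 1
  · simp
  · ext; simp [ht]

lemma tendsto_integral_gaussianReal_nhdsGT_zero {G : ℝ → ℝ} {C a : ℝ} (hGm : Measurable G)
    (hGC : ∀ y, |G y| ≤ C * exp |y|) (hG : Tendsto G (𝓝 0) (𝓝 a)) :
    Tendsto (fun t : ℝ => ∫ y, G y ∂gaussianReal 0 t.toNNReal) (𝓝[>] 0) (𝓝 a) := by
  have hscale : ∀ t ≥ 0,
      ∫ y, G y ∂gaussianReal 0 t.toNNReal = ∫ u, G (√t * u) ∂gaussianReal 0 1 := by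
    intro t ht
    rw [gaussianReal_zero_toNNReal_eq_map ht, integral_map (by fun_prop) hGm.aestronglyMeasurable]
  have hlim : ∀ u : ℝ, Tendsto (fun t => √t * u) (𝓝[>] 0) (𝓝 0) := fun u => by
    simpa using ((continuous_sqrt.tendsto 0).mono_left nhdsWithin_le_nhds).mul_const u
  have hdom := tendsto_integral_filter_of_dominated_convergence (μ := gaussianReal 0 1)
    (F := fun t u => G (√t * u)) (l := 𝓝[>] 0) (fun u => C * exp |u|)
    (Eventually.of_forall fun t => (hGm.comp (by fun_prop)).aestronglyMeasurable)
    ?_ ((integrable_exp_abs_gaussianReal 0 1).const_mul C)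
    (ae_of_all _ fun u => hG.comp (hlim u))
  · simp only [integral_const, probReal_univ, one_smul] at hdom
    refine hdom.congr' ?_
    filter_upwards [self_mem_nhdsWithin] with t ht
    exact (hscale t (le_of_lt ht)).symm
  · filter_upwards [Ioc_mem_nhdsGT zero_lt_one] with t ht
    refine ae_of_all _ fun u => (hGC _).trans ?_
    have hC : 0 ≤ C := by simpa using (abs_nonneg _).trans (hGC 0)
    have hsqrt : √t ≤ 1 := sqrt_le_one.2 ht.2
    refine mul_le_mul_of_nonneg_left (exp_le_exp.2 ?_) hC
    rw [abs_mul, abs_of_nonneg (sqrt_nonneg t)]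
    exact mul_le_of_le_one_left (abs_nonneg u) hsqrt

noncomputable def weightedSqNorm (g : ℝ → ℝ) : ℝ :=
  ∫ x, g x ^ 2 * exp (-|x|)

lemma weightedSqNorm_nonneg (g : ℝ → ℝ) : 0 ≤ weightedSqNorm g :=
  integral_nonneg fun _ => mul_nonneg (sq_nonneg _) (exp_pos _).le

lemma sq_sub_mul_exp_neg_abs_le (f : ℝ → ℝ) (z x : ℝ) :
    (f (x - z) - f x) ^ 2 * exp (-|x|) ≤
      2 * exp |z| * (f (x - z) ^ 2 * exp (-|x - z|) + f x ^ 2 * exp (-|x|)) := by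
  have hweight : exp (-|x|) ≤ exp |z| * exp (-|x - z|) := by
    rw [← exp_add]
    exact exp_le_exp.2 (by linarith [abs_sub x z])
  have hz : 1 ≤ exp |z| := one_le_exp (abs_nonneg z)
  nlinarith [mul_nonneg (sq_nonneg (f (x - z) + f x)) (exp_pos (-|x|)).le,
    mul_le_mul_of_nonneg_left hweight (sq_nonneg (f (x - z))),
    mul_le_mul_of_nonneg_left hz (mul_nonneg (sq_nonneg (f x)) (exp_pos (-|x|)).le)]

lemma sq_sub_mul_exp_neg_abs_le_half (f : ℝ → ℝ) (z x : ℝ) :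
    (f (x - z) - f x) ^ 2 * exp (-|x|) ≤
      2 * (f (x - z) * exp (-|x - z| / 2) - f x * exp (-|x| / 2)) ^ 2 +
        2 * (exp (|z| / 2) - 1) ^ 2 * (f (x - z) ^ 2 * exp (-|x - z|)) := by
  set a := f (x - z) * exp (-|x - z| / 2)
  set b := f x * exp (-|x| / 2)
  -- `r` is the ratio of the weights `e^{-|x|/2}` and `e^{-|x-z|/2}`, which lies within `e^{±|z|/2}`.
  set r := exp ((|x - z| - |x|) / 2)
  have har : a * r = f (x - z) * exp (-|x| / 2) := by
    simp only [a, r]; rw [mul_assoc, ← exp_add]; ring_nf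
  have hsq : ∀ y : ℝ, exp (-y) = exp (-y / 2) ^ 2 := fun y => by
    rw [← exp_nat_mul]; ring_nf
  have hr : (r - 1) ^ 2 ≤ (exp (|z| / 2) - 1) ^ 2 := by
    rw [← sq_abs]
    refine pow_le_pow_left₀ (abs_nonneg _) (abs_exp_sub_one_le_exp_sub_one ?_) 2
    rw [abs_div, abs_two]
    exact div_le_div_of_nonneg_right (abs_abs_sub_abs_le_abs_sub _ _ |>.trans
      (by rw [sub_sub_cancel_left, abs_neg])) zero_le_two
  have ha : a ^ 2 = f (x - z) ^ 2 * exp (-|x - z|) := by rw [hsq |x - z|]; ring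
  calc (f (x - z) - f x) ^ 2 * exp (-|x|) = (a * r - b) ^ 2 := by
        rw [har, hsq |x|]; ring
    _ = ((a - b) + a * (r - 1)) ^ 2 := by ring
    _ ≤ 2 * (a - b) ^ 2 + 2 * (r - 1) ^ 2 * a ^ 2 := by
        nlinarith [sq_nonneg (a - b - a * (r - 1))]
    _ ≤ 2 * (a - b) ^ 2 + 2 * (exp (|z| / 2) - 1) ^ 2 * a ^ 2 := by gcongr
    _ = _ := by rw [ha]

section Translation

variable {f : ℝ → ℝ}

lemma integrable_sq_sub_mul_exp_neg_abs (hf : Measurable f)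
    (hf2 : Integrable (fun x => f x ^ 2 * exp (-|x|))) (z : ℝ) :
    Integrable (fun x => (f (x - z) - f x) ^ 2 * exp (-|x|)) :=
  (((hf2.comp_sub_right z).add hf2).const_mul (2 * exp |z|)).mono' (by fun_prop)
    (ae_of_all _ fun x => by
      rw [norm_of_nonneg (mul_nonneg (sq_nonneg _) (exp_pos _).le)]
      exact sq_sub_mul_exp_neg_abs_le f z x)

lemma weightedSqNorm_sub_comp_sub_le (hf2 : Integrable (fun x => f x ^ 2 * exp (-|x|)))
    (z : ℝ) : weightedSqNorm (fun x => f (x - z) - f x) ≤ 4 * weightedSqNorm f * exp |z| := by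
  calc _ ≤ ∫ x, 2 * exp |z| * (f (x - z) ^ 2 * exp (-|x - z|) + f x ^ 2 * exp (-|x|)) :=
        integral_mono_of_nonneg (ae_of_all _ fun x => mul_nonneg (sq_nonneg _) (exp_pos _).le)
          (((hf2.comp_sub_right z).add hf2).const_mul _)
          (ae_of_all _ (sq_sub_mul_exp_neg_abs_le f z))
    _ = 4 * weightedSqNorm f * exp |z| := by
        rw [integral_const_mul, integral_add (hf2.comp_sub_right z) hf2,
          integral_sub_right_eq_self (fun x => f x ^ 2 * exp (-|x|)) z, weightedSqNorm]
        ring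

lemma measurable_weightedSqNorm_sub_comp_sub (hf : Measurable f) :
    Measurable fun z => weightedSqNorm (fun x => f (x - z) - f x) :=
  (Measurable.stronglyMeasurable
    (f := Function.uncurry fun z x => (f (x - z) - f x) ^ 2 * exp (-|x|))
    (by fun_prop)).integral_prod_right.measurable

lemma tendsto_weightedSqNorm_sub_comp_sub (hf : Measurable f)
    (hf2 : Integrable (fun x => f x ^ 2 * exp (-|x|))) :
    Tendsto (fun z => weightedSqNorm (fun x => f (x - z) - f x)) (𝓝 0) (𝓝 0) := by
  set g : ℝ → ℝ := fun x => f x * exp (-|x| / 2)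
  have hg_sq : ∀ x, g x ^ 2 = f x ^ 2 * exp (-|x|) := fun x => by
    simp only [g]; rw [mul_pow, ← exp_nat_mul]; ring_nf
  have hg : MemLp g 2 := (memLp_two_iff_integrable_sq (by fun_prop)).2 <|
    hf2.congr (ae_of_all _ fun x => (hg_sq x).symm)
  have hbound : ∀ z, weightedSqNorm (fun x => f (x - z) - f x) ≤
      2 * (∫ x, (g (x - z) - g x) ^ 2) + 2 * (exp (|z| / 2) - 1) ^ 2 * weightedSqNorm f := by
    intro z
    have hdiff : Integrable (fun x => (g (x - z) - g x) ^ 2) :=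
      ((hg.comp_measurePreserving (measurePreserving_sub_right volume z)).sub hg).integrable_sq
    calc _ ≤ ∫ x, (2 * (g (x - z) - g x) ^ 2 +
            2 * (exp (|z| / 2) - 1) ^ 2 * (f (x - z) ^ 2 * exp (-|x - z|))) :=
          integral_mono_of_nonneg (ae_of_all _ fun x => mul_nonneg (sq_nonneg _) (exp_pos _).le)
            ((hdiff.const_mul _).add ((hf2.comp_sub_right z).const_mul _))
            (ae_of_all _ (sq_sub_mul_exp_neg_abs_le_half f z))
      _ = _ := by
          rw [integral_add (hdiff.const_mul _) ((hf2.comp_sub_right z).const_mul _),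
            integral_const_mul, integral_const_mul,
            integral_sub_right_eq_self (fun x => f x ^ 2 * exp (-|x|)) z, weightedSqNorm]
  have hlim : Tendsto (fun z => 2 * (∫ x, (g (x - z) - g x) ^ 2) +
      2 * (exp (|z| / 2) - 1) ^ 2 * weightedSqNorm f) (𝓝 0) (𝓝 0) := by
    have hc : Continuous fun z : ℝ => (exp (|z| / 2) - 1) ^ 2 := by fun_prop
    simpa using ((tendsto_integral_sq_sub_comp_sub hg).const_mul 2).add
      (((hc.tendsto 0).const_mul 2).mul_const (weightedSqNorm f))
  exact tendsto_of_tendsto_of_tendsto_of_le_of_le tendsto_const_nhds hlim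
    (fun z => weightedSqNorm_nonneg _) hbound

end Translation

section Convolution

variable {f : ℝ → ℝ} {ν : Measure ℝ}

lemma integrable_weightedSqNorm_sub_comp_sub (hν : Integrable (fun y => exp |y|) ν)
    (hf : Measurable f) (hf2 : Integrable (fun x => f x ^ 2 * exp (-|x|))) :
    Integrable (fun y => weightedSqNorm (fun x => f (x - y) - f x)) ν :=
  (hν.const_mul (4 * weightedSqNorm f)).mono'
    (measurable_weightedSqNorm_sub_comp_sub hf).aestronglyMeasurable
    (ae_of_all _ fun y => by
      rw [norm_of_nonneg (weightedSqNorm_nonneg _)]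
      exact weightedSqNorm_sub_comp_sub_le hf2 y)

lemma integrable_prod_sq_sub_mul_exp_neg_abs [SFinite ν]
    (hν : Integrable (fun y => exp |y|) ν) (hf : Measurable f)
    (hf2 : Integrable (fun x => f x ^ 2 * exp (-|x|))) :
    Integrable (fun p : ℝ × ℝ => (f (p.2 - p.1) - f p.2) ^ 2 * exp (-|p.2|)) (ν.prod volume) := by
  refine (integrable_prod_iff (by fun_prop)).2
    ⟨ae_of_all _ (integrable_sq_sub_mul_exp_neg_abs hf hf2), ?_⟩
  refine (integrable_weightedSqNorm_sub_comp_sub hν hf hf2).congr (ae_of_all _ fun y => ?_)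
  simp only [weightedSqNorm]
  exact integral_congr_ae (ae_of_all _ fun x =>
    (norm_of_nonneg (mul_nonneg (sq_nonneg _) (exp_pos _).le)).symm)

lemma weightedSqNorm_integral_sub_le [IsProbabilityMeasure ν]
    (hν : Integrable (fun y => exp |y|) ν) (hf : Measurable f)
    (hf2 : Integrable (fun x => f x ^ 2 * exp (-|x|))) :
    weightedSqNorm (fun x => (∫ y, f (x - y) ∂ν) - f x) ≤
      ∫ y, weightedSqNorm (fun x => f (x - y) - f x) ∂ν := by
  set Q : ℝ × ℝ → ℝ := fun p => (f (p.2 - p.1) - f p.2) ^ 2 * exp (-|p.2|)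
  have hQ : Integrable Q (ν.prod volume) := integrable_prod_sq_sub_mul_exp_neg_abs hν hf hf2
  have hjensen : ∀ᵐ x, ((∫ y, f (x - y) ∂ν) - f x) ^ 2 * exp (-|x|) ≤ ∫ y, Q (y, x) ∂ν := by
    filter_upwards [hQ.prod_left_ae] with x hx
    set ψ : ℝ → ℝ := fun y => f (x - y) - f x
    have hψ : MemLp ψ 2 ν := (memLp_two_iff_integrable_sq (by fun_prop)).2 <|
      (hx.mul_const (exp |x|)).congr (ae_of_all _ fun y => by
        simp only [Q, ψ, mul_assoc, ← exp_add, neg_add_cancel, exp_zero, mul_one])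
    have hmean : (∫ y, f (x - y) ∂ν) - f x = ∫ y, ψ y ∂ν := by
      have hint : Integrable (fun y => f (x - y)) ν :=
        ((hψ.integrable one_le_two).add (integrable_const (f x))).congr
          (ae_of_all _ fun y => by simp [ψ])
      rw [integral_sub hint (integrable_const _), integral_const, probReal_univ, one_smul]
    calc ((∫ y, f (x - y) ∂ν) - f x) ^ 2 * exp (-|x|)
        ≤ (∫ y, ψ y ^ 2 ∂ν) * exp (-|x|) := by
          rw [hmean]; gcongr; exact sq_integral_le_integral_sq hψ
      _ = ∫ y, Q (y, x) ∂ν := by rw [← integral_mul_const]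
  calc weightedSqNorm (fun x => (∫ y, f (x - y) ∂ν) - f x)
      ≤ ∫ x, ∫ y, Q (y, x) ∂ν :=
        integral_mono_of_nonneg (ae_of_all _ fun x => mul_nonneg (sq_nonneg _) (exp_pos _).le)
          hQ.integral_prod_right hjensen
    _ = ∫ y, weightedSqNorm (fun x => f (x - y) - f x) ∂ν :=
        (integral_integral_swap (f := fun y x => Q (y, x)) hQ).symm

end Convolution

/-- Strong continuity of the heat semigroup on `𝒳₀ = L²(ℝ, e^{-|x|}dx)`:
for every `f ∈ 𝒳₀`, `‖T_t f − f‖₀ → 0` as `t → 0⁺`. -/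
theorem heatOp_strongly_continuous (f : ℝ → ℝ) (hf : Measurable f)
    (hf2 : Integrable (fun x : ℝ => f x ^ 2 * Real.exp (-|x|))) :
    Tendsto (fun t : ℝ => Real.sqrt (∫ x : ℝ, (heatOp t f x - f x) ^ 2 * Real.exp (-|x|)))
      (𝓝[>] 0) (𝓝 0) := by
  have hGauss := tendsto_integral_gaussianReal_nhdsGT_zero
    (measurable_weightedSqNorm_sub_comp_sub hf)
    (fun y => (abs_of_nonneg (weightedSqNorm_nonneg _)).trans_le
      (weightedSqNorm_sub_comp_sub_le hf2 y))
    (tendsto_weightedSqNorm_sub_comp_sub hf hf2)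
  have hsq : Tendsto (fun t => weightedSqNorm (fun x => heatOp t f x - f x)) (𝓝[>] 0) (𝓝 0) := by
    refine tendsto_of_tendsto_of_tendsto_of_le_of_le' tendsto_const_nhds hGauss
      (Eventually.of_forall fun t => weightedSqNorm_nonneg _) ?_
    filter_upwards [self_mem_nhdsWithin] with t ht
    simp_rw [heatOp_eq_integral_gaussianReal ht]
    exact weightedSqNorm_integral_sub_le (integrable_exp_abs_gaussianReal 0 _) hf hf2
  have := (continuous_sqrt.tendsto 0).comp hsq
  rwa [sqrt_zero] at this
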